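/- Let U ⊆ ℝ^q be open, Γ a continuous field of connection coefficients on U, ψ, σ : U → (Fin q → ℝ) continuous covector fields, and F : U → (Fin q → Fin q → ℝ) a continuous (1,1)-tensor field. Define the na₍₂₎-type deformed connection Γ̄^τ_{αβ} = Γ^τ_{αβ} + ψ_α δ^τ_β + ψ_β δ^τ_α + σ_α F^τ_β + σ_β F^τ_α. If u : (η₁,η₂) → U is an autoparallel of Γ with factor ρ, then for every η the Γ̄-acceleration a^τ(η) := u''^τ(η) + Σ_{α,β} Γ̄^τ_{αβ}(u(η)) u'^α(η) u'^β(η) satisfies a = (ρ + 2 Σ_τ ψ_τ(u) u'^τ) • u' + (2 Σ_τ σ_τ(u) u'^τ) • (F(u)u'), where (F(u)u')^τ = Σ_β F^τ_β(u) u'^β; in particular a(η) lies in the linear span of u'(η) and F(u(η))u'(η). (Hence na₍₂₎-type deformations carry every a-parallel into a nearly autoparallel curve, whose acceleration stays in a 2-dimensional distribution containing the tangent vector.) -/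

import Mathlib

/-! The claim is pointwise algebra in `η`: contracting the symmetrized deformation tensor twice
with `u'` gives `2 (ψ·u') u' + 2 (σ·u') F u'`, and the autoparallel equation replaces
`u'' + Γ(u', u')` by `ρ u'`. -/

/-- Kronecker delta on `Fin q`. -/
def kron {q : ℕ} (μ α : Fin q) : ℝ := if μ = α then 1 else 0

open Finset

section Deformation

variable {q : ℕ}

theorem sum_kron_mul (τ : Fin q) (v : Fin q → ℝ) : ∑ β, kron τ β * v β = v τ := by
  simp [kron]

theorem sum_sum_symmetrized_mul_mul (σ : Fin q → ℝ) (F : Fin q → Fin q → ℝ)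
    (v : Fin q → ℝ) (τ : Fin q) :
    ∑ α, ∑ β, (σ α * F τ β + σ β * F τ α) * v α * v β =
      2 * (∑ α, σ α * v α) * ∑ β, F τ β * v β := by
  have hsplit : ∀ α β, (σ α * F τ β + σ β * F τ α) * v α * v β =
      σ α * v α * (F τ β * v β) + F τ α * v α * (σ β * v β) := fun α β => by ring
  simp only [hsplit, sum_add_distrib, ← mul_sum, ← sum_mul]
  ring

theorem deformed_acceleration_eq (Γ : Fin q → Fin q → Fin q → ℝ) (ψ σ : Fin q → ℝ)
    (F : Fin q → Fin q → ℝ) (a v : Fin q → ℝ) (ρ : ℝ)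
    (hauto : ∀ α, a α + ∑ β, ∑ γ, Γ α β γ * v β * v γ = ρ * v α) :
    (fun τ => a τ + ∑ α, ∑ β,
        (Γ τ α β + ψ α * kron τ β + ψ β * kron τ α + σ α * F τ β + σ β * F τ α) *
          v α * v β) =
      (ρ + 2 * ∑ τ, ψ τ * v τ) • v + (2 * ∑ τ, σ τ * v τ) • (fun τ => ∑ β, F τ β * v β) := by
  funext τ
  have hsplit : ∀ α β,
      (Γ τ α β + ψ α * kron τ β + ψ β * kron τ α + σ α * F τ β + σ β * F τ α) * v α * v β =
        Γ τ α β * v α * v β + (ψ α * kron τ β + ψ β * kron τ α) * v α * v β +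
          (σ α * F τ β + σ β * F τ α) * v α * v β := fun α β => by ring
  simp only [hsplit, sum_add_distrib, sum_sum_symmetrized_mul_mul, sum_kron_mul, Pi.add_apply,
    Pi.smul_apply, smul_eq_mul]
  linear_combination hauto τ

end Deformation

theorem stmt_8_general (q : ℕ)
    (Γ : (Fin q → ℝ) → Fin q → Fin q → Fin q → ℝ)
    (ψ σ : (Fin q → ℝ) → Fin q → ℝ)
    (F : (Fin q → ℝ) → Fin q → Fin q → ℝ)
    (η₁ η₂ : ℝ) (u u' u'' : ℝ → Fin q → ℝ)
    (ρ : ℝ → ℝ)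
    (hauto : ∀ η ∈ Set.Ioo η₁ η₂, ∀ α,
      u'' η α + ∑ β, ∑ γ, Γ (u η) α β γ * u' η β * u' η γ = ρ η * u' η α) :
    ∀ η ∈ Set.Ioo η₁ η₂,
      (fun τ => u'' η τ + ∑ α, ∑ β,
          (Γ (u η) τ α β + ψ (u η) α * kron τ β + ψ (u η) β * kron τ α +
            σ (u η) α * F (u η) τ β + σ (u η) β * F (u η) τ α) *
            u' η α * u' η β) =
        (ρ η + 2 * ∑ τ, ψ (u η) τ * u' η τ) • u' η +
          (2 * ∑ τ, σ (u η) τ * u' η τ) • (fun τ => ∑ β, F (u η) τ β * u' η β) ∧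
      (fun τ => u'' η τ + ∑ α, ∑ β,
          (Γ (u η) τ α β + ψ (u η) α * kron τ β + ψ (u η) β * kron τ α +
            σ (u η) α * F (u η) τ β + σ (u η) β * F (u η) τ α) *
            u' η α * u' η β) ∈
        Submodule.span ℝ ({u' η, fun τ => ∑ β, F (u η) τ β * u' η β} :
          Set (Fin q → ℝ)) := by
  intro η hη
  have hacc := deformed_acceleration_eq (Γ (u η)) (ψ (u η)) (σ (u η)) (F (u η)) (u'' η) (u' η)
    (ρ η) (hauto η hη)
  exact ⟨hacc, hacc ▸ Submodule.mem_span_pair.mpr ⟨_, _, rfl⟩⟩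

/-- na₍₂₎-type deformations
`Γ̄^τ_{αβ} = Γ^τ_{αβ} + ψ_(α δ^τ_β) + σ_(α F^τ_β)` carry every a-parallel of `Γ`
into a nearly autoparallel curve: its `Γ̄`-acceleration equals
`(ρ + 2ψ_τ u'^τ) • u' + (2σ_τ u'^τ) • (F u')`, hence lies in the span of `u'`
and `F u'`. -/
theorem stmt_8 (q : ℕ) (U : Set (Fin q → ℝ)) (hU : IsOpen U)
    (Γ : (Fin q → ℝ) → Fin q → Fin q → Fin q → ℝ) (hΓ : ContinuousOn Γ U)
    (ψ σ : (Fin q → ℝ) → Fin q → ℝ) (hψ : ContinuousOn ψ U) (hσ : ContinuousOn σ U)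
    (F : (Fin q → ℝ) → Fin q → Fin q → ℝ) (hF : ContinuousOn F U)
    (η₁ η₂ : ℝ) (u u' u'' : ℝ → Fin q → ℝ)
    (hmem : ∀ η ∈ Set.Ioo η₁ η₂, u η ∈ U)
    (hd1 : ∀ η ∈ Set.Ioo η₁ η₂, HasDerivAt u (u' η) η)
    (hd2 : ∀ η ∈ Set.Ioo η₁ η₂, HasDerivAt u' (u'' η) η)
    (ρ : ℝ → ℝ)
    (hauto : ∀ η ∈ Set.Ioo η₁ η₂, ∀ α,
      u'' η α + ∑ β, ∑ γ, Γ (u η) α β γ * u' η β * u' η γ = ρ η * u' η α) :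
    ∀ η ∈ Set.Ioo η₁ η₂,
      (fun τ => u'' η τ + ∑ α, ∑ β,
          (Γ (u η) τ α β + ψ (u η) α * kron τ β + ψ (u η) β * kron τ α +
            σ (u η) α * F (u η) τ β + σ (u η) β * F (u η) τ α) *
            u' η α * u' η β) =
        (ρ η + 2 * ∑ τ, ψ (u η) τ * u' η τ) • u' η +
          (2 * ∑ τ, σ (u η) τ * u' η τ) • (fun τ => ∑ β, F (u η) τ β * u' η β) ∧
      (fun τ => u'' η τ + ∑ α, ∑ β,
          (Γ (u η) τ α β + ψ (u η) α * kron τ β + ψ (u η) β * kron τ α +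
            σ (u η) α * F (u η) τ β + σ (u η) β * F (u η) τ α) *
            u' η α * u' η β) ∈
        Submodule.span ℝ ({u' η, fun τ => ∑ β, F (u η) τ β * u' η β} :
          Set (Fin q → ℝ)) :=
  stmt_8_general q Γ ψ σ F η₁ η₂ u u' u'' ρ hauto
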